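/- Let J be a finite set, v̄_j > 0 for j ∈ J, φ_j := φ_{v̄_j}, and ψ_j(z) := v̄_j/(e(1−z)²) for 0 ≤ z < 1 − 1/e and ψ_j(z) := 0 for 1 − 1/e ≤ z ≤ 1. For any measurable Q_j : [0,1] → [0,1] (j ∈ J), ∫_0^1 [Σ_{j∈J} φ_j(z)·Q_j(z) − ∫_0^z Σ_{j∈J} ψ_j(s)·Q_j(s) ds] dz = Σ_{j∈J} v̄_j · ∫_{1−1/e}^1 Q_j(z) dz. -/

import Mathlib

/-- The equal-revenue quantile function: `φ_{v̄}(z) = v̄/(e(1−z))` for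
`z < 1 − 1/e` and `φ_{v̄}(z) = v̄` for `z ≥ 1 − 1/e`. -/
noncomputable def erQuantile (vb z : ℝ) : ℝ :=
  if z < 1 - 1 / Real.exp 1 then vb / (Real.exp 1 * (1 - z)) else vb

/-- Its derivative off `z = 1 − 1/e`: `ψ(z) = v̄/(e(1−z)²)` for `z < 1 − 1/e`
and `0` for `z ≥ 1 − 1/e`. -/
noncomputable def erQuantileDeriv (vb z : ℝ) : ℝ :=
  if z < 1 - 1 / Real.exp 1 then vb / (Real.exp 1 * (1 - z) ^ 2) else 0

/-! Fubini on the triangle `0 < s ≤ z ≤ 1` turns `∫₀¹ ∫₀ᶻ ψ(s) Q(s) ds dz` into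
`∫₀¹ (1 - s) ψ(s) Q(s) ds`, and `φ(z) - (1 - z) ψ(z)` vanishes below `1 - 1/e` and equals `v̄`
from there on. Summing over `j` is linearity, since all integrands are bounded. -/

open MeasureTheory Set Real

theorem IntervalIntegrable.bdd_mul {𝕜 : Type*} [NormedRing 𝕜] {f g : ℝ → 𝕜} {μ : Measure ℝ}
    {a b C : ℝ} (hg : IntervalIntegrable g μ a b) (hf : AEStronglyMeasurable f μ)
    (hC : ∀ x, ‖f x‖ ≤ C) : IntervalIntegrable (fun x => f x * g x) μ a b :=
  ⟨hg.1.bdd_mul hf.restrict (.of_forall hC), hg.2.bdd_mul hf.restrict (.of_forall hC)⟩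

theorem IntervalIntegrable.primitive {E : Type*} [NormedAddCommGroup E] [NormedSpace ℝ E]
    {g : ℝ → E} {a b : ℝ} (hg : IntervalIntegrable g volume a b) :
    IntervalIntegrable (fun z => ∫ s in a..z, g s) volume a b :=
  (intervalIntegral.continuousOn_primitive_interval' hg left_mem_uIcc).intervalIntegrable

theorem Set.Ioc_inter_Ici_of_lt {α : Type*} [LinearOrder α] {a b c : α} (hac : a < c) :
    Ioc a b ∩ Ici c = Icc c b := by
  ext x
  simp only [mem_inter_iff, mem_Ioc, mem_Ici, mem_Icc]
  exact ⟨fun ⟨⟨_, hxb⟩, hcx⟩ => ⟨hcx, hxb⟩, fun ⟨hcx, hxb⟩ => ⟨⟨hac.trans_le hcx, hxb⟩, hcx⟩⟩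

theorem intervalIntegral.integral_indicator_Ici {E : Type*} [NormedAddCommGroup E]
    [NormedSpace ℝ E] {f : ℝ → E} {μ : Measure ℝ} [NullSingletonClass μ] {a b c : ℝ}
    (hac : a < c) (hcb : c ≤ b) : ∫ x in a..b, (Ici c).indicator f x ∂μ = ∫ x in c..b, f x ∂μ := by
  rw [intervalIntegral.integral_of_le (hac.le.trans hcb), intervalIntegral.integral_of_le hcb,
    setIntegral_indicator measurableSet_Ici, Set.Ioc_inter_Ici_of_lt hac,
    integral_Icc_eq_integral_Ioc]

theorem intervalIntegral.integral_primitive_eq_integral_sub_smul {E : Type*}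
    [NormedAddCommGroup E] [NormedSpace ℝ E] [CompleteSpace E] {g : ℝ → E} {a b : ℝ}
    (hab : a ≤ b) (hg : IntervalIntegrable g volume a b) :
    ∫ z in a..b, ∫ s in a..z, g s = ∫ s in a..b, (b - s) • g s := by
  set μ := volume.restrict (Ioc a b)
  have : IsFiniteMeasure μ := isFiniteMeasure_restrict.2 measure_Ioc_lt_top.ne
  set F : ℝ → ℝ → E := fun z s => {p : ℝ × ℝ | p.2 ≤ p.1}.indicator (g ·.2) (z, s)
  have hF : Integrable (Function.uncurry F) (μ.prod μ) :=
    (((intervalIntegrable_iff_integrableOn_Ioc_of_le hab).1 hg).comp_snd μ).indicator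
      (measurableSet_le measurable_snd measurable_fst)
  have inner_eq : ∀ z ∈ Ioc a b, ∫ s in a..z, g s = ∫ s, F z s ∂μ := by
    intro z hz
    have : ∀ s, F z s = (Iic z).indicator g s := fun s => by
      simp only [F, indicator, mem_ofPred_eq, mem_Iic]
    simp only [this, μ, setIntegral_indicator measurableSet_Iic, Ioc_inter_Iic,
      inf_eq_right.2 hz.2, intervalIntegral.integral_of_le hz.1.le]
  have outer_eq : ∀ s ∈ Ioc a b, ∫ z, F z s ∂μ = (b - s) • g s := by
    intro s hs
    have : ∀ z, F z s = (Ici s).indicator (fun _ => g s) z := fun z => by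
      simp only [F, indicator, mem_ofPred_eq, mem_Ici]
    simp only [this, μ, setIntegral_indicator measurableSet_Ici, Set.Ioc_inter_Ici_of_lt hs.1]
    rw [setIntegral_const, Real.volume_real_Icc_of_le hs.2]
  calc ∫ z in a..b, ∫ s in a..z, g s = ∫ z, ∫ s, F z s ∂μ ∂μ := by
        rw [intervalIntegral.integral_of_le hab]
        exact setIntegral_congr_fun measurableSet_Ioc inner_eq
    _ = ∫ s, ∫ z, F z s ∂μ ∂μ := integral_integral_swap hF
    _ = ∫ s in a..b, (b - s) • g s := by
        rw [intervalIntegral.integral_of_le hab]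
        exact setIntegral_congr_fun measurableSet_Ioc outer_eq

theorem one_sub_one_div_exp_one_mem_Ioo : 1 - 1 / exp 1 ∈ Ioo (0 : ℝ) 1 := by
  have : 1 / exp 1 < 1 := (div_lt_one (exp_pos 1)).2 (one_lt_exp_iff.2 one_pos)
  constructor <;> [linarith; linarith [one_div_pos.2 (exp_pos 1)]]

theorem one_lt_exp_one_mul_one_sub {z : ℝ} (hz : z < 1 - 1 / exp 1) : 1 < exp 1 * (1 - z) := by
  rw [← div_lt_iff₀' (exp_pos 1)]
  linarith

theorem measurable_erQuantileDeriv (v : ℝ) : Measurable (erQuantileDeriv v) :=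
  Measurable.ite measurableSet_Iio (by fun_prop) measurable_const

theorem measurable_erQuantile (v : ℝ) : Measurable (erQuantile v) :=
  Measurable.ite measurableSet_Iio (by fun_prop) measurable_const

theorem abs_erQuantile_le (v z : ℝ) : |erQuantile v z| ≤ |v| := by
  unfold erQuantile
  split_ifs with hz
  · have h := one_lt_exp_one_mul_one_sub hz
    rw [abs_div, abs_of_pos (zero_lt_one.trans h)]
    exact div_le_self (abs_nonneg v) h.le
  · rfl

theorem abs_erQuantileDeriv_le (v z : ℝ) : |erQuantileDeriv v z| ≤ |v| * exp 1 := by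
  unfold erQuantileDeriv
  split_ifs with hz
  · have h := one_lt_exp_one_mul_one_sub hz
    have hz' : 1 - z ≠ 0 := sub_ne_zero.2 (hz.trans one_sub_one_div_exp_one_mem_Ioo.2).ne'
    calc |v / (exp 1 * (1 - z) ^ 2)| = |v| * exp 1 / (exp 1 * (1 - z)) ^ 2 := by
          rw [abs_div, abs_of_nonneg (by positivity : (0 : ℝ) ≤ exp 1 * (1 - z) ^ 2)]
          field_simp
      _ ≤ |v| * exp 1 := div_le_self (by positivity) (one_le_pow₀ h.le)
  · simp only [abs_zero]; positivity

theorem IntervalIntegrable.erQuantile_mul (v : ℝ) {q : ℝ → ℝ} {μ : Measure ℝ} {a b : ℝ}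
    (hq : IntervalIntegrable q μ a b) :
    IntervalIntegrable (fun z => erQuantile v z * q z) μ a b :=
  hq.bdd_mul (measurable_erQuantile v).aestronglyMeasurable (abs_erQuantile_le v)

theorem IntervalIntegrable.erQuantileDeriv_mul (v : ℝ) {q : ℝ → ℝ} {μ : Measure ℝ} {a b : ℝ}
    (hq : IntervalIntegrable q μ a b) :
    IntervalIntegrable (fun z => erQuantileDeriv v z * q z) μ a b :=
  hq.bdd_mul (measurable_erQuantileDeriv v).aestronglyMeasurable (abs_erQuantileDeriv_le v)

theorem erQuantile_sub_mul_erQuantileDeriv (v z : ℝ) :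
    erQuantile v z - (1 - z) * erQuantileDeriv v z
      = (Ici (1 - 1 / exp 1)).indicator (fun _ => v) z := by
  unfold erQuantile erQuantileDeriv
  split_ifs with hz
  · have hz' : 1 - z ≠ 0 := sub_ne_zero.2 (hz.trans one_sub_one_div_exp_one_mem_Ioo.2).ne'
    rw [indicator_of_notMem (notMem_Ici.2 hz)]
    field_simp
    ring
  · rw [indicator_of_mem (mem_Ici.2 (not_lt.1 hz))]
    ring

theorem integral_erQuantile_mul_sub_primitive (v : ℝ) {q : ℝ → ℝ}
    (hq : IntervalIntegrable q volume 0 1) :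
    ∫ z in (0:ℝ)..1, (erQuantile v z * q z - ∫ s in (0:ℝ)..z, erQuantileDeriv v s * q s)
      = v * ∫ z in (1 - 1 / exp 1)..1, q z := by
  have hφq := hq.erQuantile_mul v
  have hψq := hq.erQuantileDeriv_mul v
  obtain ⟨hc0, hc1⟩ := one_sub_one_div_exp_one_mem_Ioo
  calc ∫ z in (0:ℝ)..1, (erQuantile v z * q z - ∫ s in (0:ℝ)..z, erQuantileDeriv v s * q s)
      = ∫ z in (0:ℝ)..1, (erQuantile v z * q z - (1 - z) * (erQuantileDeriv v z * q z)) := by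
        rw [intervalIntegral.integral_sub hφq hψq.primitive,
          intervalIntegral.integral_primitive_eq_integral_sub_smul zero_le_one hψq,
          intervalIntegral.integral_sub hφq (hψq.continuousOn_mul (by fun_prop))]
        simp only [smul_eq_mul]
    _ = ∫ z in (0:ℝ)..1, (Ici (1 - 1 / exp 1)).indicator (fun z => v * q z) z := by
        congr 1 with z
        rw [indicator_mul_left, ← erQuantile_sub_mul_erQuantileDeriv]
        ring
    _ = v * ∫ z in (1 - 1 / exp 1)..1, q z := by
        rw [intervalIntegral.integral_indicator_Ici hc0 hc1.le, intervalIntegral.integral_const_mul]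

theorem stmt_10_general {J : Type*} [Fintype J] (vbar : J → ℝ)
    (Q : J → ℝ → ℝ) (hQm : ∀ j, Measurable (Q j))
    (hQ : ∀ j, ∀ z ∈ Set.Icc (0:ℝ) 1, 0 ≤ Q j z ∧ Q j z ≤ 1) :
    (∫ z in (0:ℝ)..1, ((∑ j, erQuantile (vbar j) z * Q j z)
        - ∫ s in (0:ℝ)..z, ∑ j, erQuantileDeriv (vbar j) s * Q j s))
      = ∑ j, vbar j * ∫ z in (1 - 1 / Real.exp 1)..1, Q j z := by
  have hQi : ∀ j, IntervalIntegrable (Q j) volume 0 1 := fun j =>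
    (intervalIntegrable_iff_integrableOn_Icc_of_le zero_le_one).2 <|
      Measure.integrableOn_of_bounded measure_Icc_lt_top.ne (hQm j).aestronglyMeasurable
        (M := 1) <| by
          filter_upwards [ae_restrict_mem measurableSet_Icc] with z hz
          exact abs_le.2 ⟨by linarith [(hQ j z hz).1], (hQ j z hz).2⟩
  calc (∫ z in (0:ℝ)..1, ((∑ j, erQuantile (vbar j) z * Q j z)
        - ∫ s in (0:ℝ)..z, ∑ j, erQuantileDeriv (vbar j) s * Q j s))
      = ∫ z in (0:ℝ)..1, ∑ j, (erQuantile (vbar j) z * Q j z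
          - ∫ s in (0:ℝ)..z, erQuantileDeriv (vbar j) s * Q j s) := by
        refine intervalIntegral.integral_congr fun z hz => ?_
        have hsub : uIcc 0 z ⊆ uIcc (0:ℝ) 1 := uIcc_subset_uIcc_left hz
        rw [intervalIntegral.integral_finsetSum fun j _ =>
          ((hQi j).erQuantileDeriv_mul _).mono_set hsub, Finset.sum_sub_distrib]
    _ = ∑ j, ∫ z in (0:ℝ)..1, (erQuantile (vbar j) z * Q j z
          - ∫ s in (0:ℝ)..z, erQuantileDeriv (vbar j) s * Q j s) :=
        intervalIntegral.integral_finsetSum fun j _ =>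
          ((hQi j).erQuantile_mul _).sub ((hQi j).erQuantileDeriv_mul _).primitive
    _ = ∑ j, vbar j * ∫ z in (1 - 1 / Real.exp 1)..1, Q j z :=
        Finset.sum_congr rfl fun j _ => integral_erQuantile_mul_sub_primitive _ (hQi j)

/-- the integration-by-parts (Fubini) identity in the proof of
Proposition 2:
`∫_0^1 [Σ_j φ_j(z)·Q_j(z) − ∫_0^z Σ_j ψ_j(s)·Q_j(s) ds] dz
  = Σ_j v̄_j · ∫_{1−1/e}^1 Q_j(z) dz`. -/
theorem stmt_10 {J : Type*} [Fintype J] (vbar : J → ℝ) (hvbar : ∀ j, 0 < vbar j)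
    (Q : J → ℝ → ℝ) (hQm : ∀ j, Measurable (Q j))
    (hQ : ∀ j, ∀ z ∈ Set.Icc (0:ℝ) 1, 0 ≤ Q j z ∧ Q j z ≤ 1) :
    (∫ z in (0:ℝ)..1, ((∑ j, erQuantile (vbar j) z * Q j z)
        - ∫ s in (0:ℝ)..z, ∑ j, erQuantileDeriv (vbar j) s * Q j s))
      = ∑ j, vbar j * ∫ z in (1 - 1 / Real.exp 1)..1, Q j z :=
  stmt_10_general vbar Q hQm hQ
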